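/- arXiv:2504.08980 — 2 statements merged into one kernel-verified Lean document; each statement's English description precedes it below -/
import Mathlib

section
/- In the hyper-SBM with classes of sizes n_1,…,n_d, membership matrix Z, B = diag(1/n_r), type matrix T ∈ ℕ^{d×m}, and j the all-ones vector in ℝ^m, the hollowed mean matrix satisfies H(E[RRᵀ]) = Z B Σ_T B Zᵀ − ⊕_{r=1}^d μ_r (I_{n_r} − J_{n_r}/n_r), where Σ_T = TTᵀ − diag(Tj) and μ_r = Σ_{p=1}^m T_{rp}(T_{rp}−1)/(n_r(n_r−1)). -/
/-!
Entrywise, `Z B Σ_T B Zᵀ` has `(i, j)` entry `(Σ_T)_{rs} / (n_r n_s)` for the classes `r, s`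
of `i, j`, and `(Σ_T)_{rs} = ∑ₚ T_{rp} T_{sp} - δ_{rs} ∑ₚ T_{rp}`. Off the diagonal blocks this
is the mean entry directly. Within block `r` everything reduces to the scalar identity
`(t² - t) / k² = t (t - 1) / (k (k - 1)) · (1 - 1/k)`, summed over `p`, which makes the diagonal
vanish and turns the off-diagonal entries of the block into `μ_r`.
-/

open Matrix

def membershipMatrix (R : Type*) [Zero R] [One R] {ι κ : Type*} [DecidableEq κ] (z : ι → κ) :
    Matrix ι κ R :=
  Matrix.of fun i r => if z i = r then 1 else 0

theorem membershipMatrix_mul_mul_transpose {ι κ R : Type*} [Fintype κ] [DecidableEq κ]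
    [NonAssocSemiring R] (z : ι → κ) (M : Matrix κ κ R) :
    membershipMatrix R z * M * (membershipMatrix R z)ᵀ = M.submatrix z z := by
  ext i j
  simp [membershipMatrix, mul_apply]

theorem inv_mul_sub_mul_inv_eq_of_le {t k : ℕ} (h : t ≤ k) :
    (k : ℝ)⁻¹ * ((t : ℝ) * t - t) * (k : ℝ)⁻¹
      = t * ((t : ℝ) - 1) / (k * ((k : ℝ) - 1)) * (1 - (k : ℝ)⁻¹) := by
  rcases Nat.lt_or_ge k 2 with hk | hk
  · -- for `k ≤ 1` both sides vanish: the junk `/ 0` on the right, `t ≤ 1` on the left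
    interval_cases k <;> interval_cases t <;> norm_num
  · have hk' : (2 : ℝ) ≤ k := by exact_mod_cast hk
    have : (k : ℝ) - 1 ≠ 0 := by linarith
    field_simp

theorem stmt10_general (n m d : ℕ) (z : Fin n → Fin d)
    (nr : Fin d → ℕ)
    (T : Fin d → Fin m → ℕ) (hT : ∀ r p, T r p ≤ nr r)
    (Z : Matrix (Fin n) (Fin d) ℝ) (hZ : Z = Matrix.of fun i r => if z i = r then 1 else 0)
    (B : Matrix (Fin d) (Fin d) ℝ) (hB : B = Matrix.diagonal fun r => ((nr r : ℝ))⁻¹)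
    (Tm : Matrix (Fin d) (Fin m) ℝ) (hTm : Tm = Matrix.of fun r p => (T r p : ℝ))
    (SigT : Matrix (Fin d) (Fin d) ℝ)
    (hSigT : SigT = Tm * Tm.transpose - Matrix.diagonal fun r => ∑ p, (T r p : ℝ))
    (μ : Fin d → ℝ)
    (hμ : μ = fun r => ∑ p, (T r p : ℝ) * ((T r p : ℝ) - 1) / ((nr r : ℝ) * ((nr r : ℝ) - 1)))
    (Em : Matrix (Fin n) (Fin n) ℝ)
    (hEm : Em = Matrix.of fun i j =>
      if i = j then ∑ p, (T (z i) p : ℝ) / (nr (z i) : ℝ)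
      else if z i = z j then
        ∑ p, (T (z i) p : ℝ) * ((T (z i) p : ℝ) - 1) / ((nr (z i) : ℝ) * ((nr (z i) : ℝ) - 1))
      else ∑ p, (T (z i) p : ℝ) * (T (z j) p : ℝ) / ((nr (z i) : ℝ) * (nr (z j) : ℝ)))
    (D : Matrix (Fin n) (Fin n) ℝ)
    (hD : D = Matrix.of fun i j =>
      if z i = z j then μ (z i) * ((if i = j then 1 else 0) - ((nr (z i) : ℝ))⁻¹) else 0) :
    Em - Matrix.diagonal (fun i => Em i i) = Z * B * SigT * B * Z.transpose - D := by
  have hSigT_apply : ∀ r s,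
      SigT r s = ∑ p, ((T r p : ℝ) * T s p - if r = s then (T r p : ℝ) else 0) := by
    intro r s
    by_cases hrs : r = s <;> simp [hSigT, hTm, mul_apply, hrs, Finset.sum_sub_distrib]
  have hblock : ∀ r, (nr r : ℝ)⁻¹ * SigT r r * (nr r : ℝ)⁻¹ = μ r * (1 - (nr r : ℝ)⁻¹) := by
    intro r
    simp only [hSigT_apply, if_true, hμ, Finset.mul_sum, Finset.sum_mul]
    exact Finset.sum_congr rfl fun p _ => inv_mul_sub_mul_inv_eq_of_le (hT r p)
  have hmean : Z * B * SigT * B * Zᵀ = (B * SigT * B).submatrix z z := by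
    rw [show Z = membershipMatrix ℝ z from hZ, ← membershipMatrix_mul_mul_transpose]
    simp only [Matrix.mul_assoc]
  ext i j
  rw [hmean, hEm, hD, hB]
  by_cases hij : i = j
  · subst hij
    simp [hblock]
  · by_cases hz : z i = z j
    · simp [hij, hz, hblock, hμ]
      ring
    · simp only [Matrix.sub_apply, of_apply, submatrix_apply, mul_diagonal, diagonal_mul,
        diagonal_apply_ne _ hij, hij, hz, if_false, sub_zero, hSigT_apply, Finset.mul_sum,
        Finset.sum_mul]
      exact Finset.sum_congr rfl fun p _ => by rw [div_eq_mul_inv, mul_inv]; ring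

/-- Eigendecomposition lemma setup for the hyper-SBM: the hollowed mean matrix satisfies
`H(E[RRᵀ]) = Z B Σ_T B Zᵀ - ⊕ᵣ μᵣ (I_{nᵣ} - J_{nᵣ}/nᵣ)`, where
`Σ_T = TTᵀ - diag(Tj)` and `μᵣ = Σₚ T_{rp}(T_{rp}-1)/(nᵣ(nᵣ-1))`. The block-diagonal
matrix `⊕ᵣ μᵣ (I_{nᵣ} - J_{nᵣ}/nᵣ)` has `(i,j)` entry
`μ_{z i}·(δ_{ij} - 1/n_{z i})` when `z i = z j` and `0` otherwise. -/
theorem stmt10 (n m d : ℕ) (z : Fin n → Fin d)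
    (nr : Fin d → ℕ) (hnr : nr = fun r => (Finset.univ.filter fun i => z i = r).card)
    (hpos : ∀ r, 0 < nr r)
    (T : Fin d → Fin m → ℕ) (hT : ∀ r p, T r p ≤ nr r)
    (Z : Matrix (Fin n) (Fin d) ℝ) (hZ : Z = Matrix.of fun i r => if z i = r then 1 else 0)
    (B : Matrix (Fin d) (Fin d) ℝ) (hB : B = Matrix.diagonal fun r => ((nr r : ℝ))⁻¹)
    (Tm : Matrix (Fin d) (Fin m) ℝ) (hTm : Tm = Matrix.of fun r p => (T r p : ℝ))
    (SigT : Matrix (Fin d) (Fin d) ℝ)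
    (hSigT : SigT = Tm * Tm.transpose - Matrix.diagonal fun r => ∑ p, (T r p : ℝ))
    (μ : Fin d → ℝ)
    (hμ : μ = fun r => ∑ p, (T r p : ℝ) * ((T r p : ℝ) - 1) / ((nr r : ℝ) * ((nr r : ℝ) - 1)))
    (Em : Matrix (Fin n) (Fin n) ℝ)
    (hEm : Em = Matrix.of fun i j =>
      if i = j then ∑ p, (T (z i) p : ℝ) / (nr (z i) : ℝ)
      else if z i = z j then
        ∑ p, (T (z i) p : ℝ) * ((T (z i) p : ℝ) - 1) / ((nr (z i) : ℝ) * ((nr (z i) : ℝ) - 1))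
      else ∑ p, (T (z i) p : ℝ) * (T (z j) p : ℝ) / ((nr (z i) : ℝ) * (nr (z j) : ℝ)))
    (D : Matrix (Fin n) (Fin n) ℝ)
    (hD : D = Matrix.of fun i j =>
      if z i = z j then μ (z i) * ((if i = j then 1 else 0) - ((nr (z i) : ℝ))⁻¹) else 0) :
    Em - Matrix.diagonal (fun i => Em i i) = Z * B * SigT * B * Z.transpose - D :=
  stmt10_general n m d z nr T hT Z hZ B hB Tm hTm SigT hSigT μ hμ Em hEm D hD
end

section
/- In the hyper-SBM, the d-dimensional latent positions of interactions separate identically and distinctly typed interactions: with Γ = ZBT of rank d and SVD Γ = USVᵀ (U ∈ ℝ^{n×d}, S diagonal positive definite, V ∈ ℝ^{m×d}), one has S Vᵀ e_p = S Vᵀ e_{p'} if and only if the type vectors satisfy T e_p = T e_{p'}. -/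
open Finset

/-
Since `Uᵀ U = 1`, the factorisation `Γ = U (S Vᵀ)` can be inverted to `S Vᵀ = Uᵀ Γ`; so two columns of
`S Vᵀ` agree exactly when the corresponding columns of `Γ` do. The entry `Γ i p = T (z i) p / n_{z i}`
depends on `i` only through its community `z i`, every community is nonempty, and so two columns of `Γ`
agree exactly when the corresponding columns of `T` do.
-/

namespace Matrix

variable {l n k m R : Type*} [Fintype n] [Fintype k] [DecidableEq k] [Semiring R]

theorem mul_apply_eq_of_col_eq (A : Matrix l n R) {B : Matrix n m R} {p p' : m}
    (h : ∀ r, B r p = B r p') (i : l) : (A * B) i p = (A * B) i p' := by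
  simp only [mul_apply, h]

theorem col_mul_eq_iff_of_mul_eq_one {L : Matrix k n R} {U : Matrix n k R} (hLU : L * U = 1)
    (M : Matrix k m R) (p p' : m) :
    (∀ i, (U * M) i p = (U * M) i p') ↔ ∀ r, M r p = M r p' := by
  refine ⟨fun h r => ?_, mul_apply_eq_of_col_eq U⟩
  have hM : L * (U * M) = M := by rw [← Matrix.mul_assoc, hLU, Matrix.one_mul]
  rw [← hM]
  exact mul_apply_eq_of_col_eq L h r

end Matrix

theorem col_eq_iff_of_apply_eq_div_comp {ι κ μ K : Type*} [Field K] [CharZero K]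
    {z : ι → κ} (hz : Function.Surjective z) {c : κ → K} (hc : ∀ r, c r ≠ 0) (T : κ → μ → ℕ)
    (p p' : μ) :
    (∀ i, (T (z i) p : K) / c (z i) = (T (z i) p' : K) / c (z i)) ↔ ∀ r, T r p = T r p' := by
  refine ⟨fun h r => ?_, fun h i => by rw [h]⟩
  obtain ⟨i, rfl⟩ := hz r
  exact_mod_cast (div_left_inj' (hc (z i))).mp (h i)

theorem stmt17_general (n m d : ℕ) (z : Fin n → Fin d) (hzsurj : Function.Surjective z)
    (nr : Fin d → ℕ) (hnr : nr = fun r => (Finset.univ.filter fun i => z i = r).card)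
    (T : Fin d → Fin m → ℕ)
    (Γ : Matrix (Fin n) (Fin m) ℝ)
    (hΓ : Γ = Matrix.of fun i p => (T (z i) p : ℝ) / (nr (z i) : ℝ))
    (U : Matrix (Fin n) (Fin d) ℝ) (hU : U.transpose * U = 1)
    (S : Matrix (Fin d) (Fin d) ℝ)
    (V : Matrix (Fin m) (Fin d) ℝ)
    (hSVD : Γ = U * S * V.transpose)
    (p p' : Fin m) :
    (fun r => (S * V.transpose) r p) = (fun r => (S * V.transpose) r p') ↔
      (fun r => T r p) = fun r => T r p' := by
  have hΓ_factor : U * (S * V.transpose) = Γ := by rw [hSVD, Matrix.mul_assoc]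
  have hnr_ne_zero : ∀ r, (nr r : ℝ) ≠ 0 := fun r => by
    obtain ⟨i, hi⟩ := hzsurj r
    rw [hnr, Nat.cast_ne_zero, ← pos_iff_ne_zero, card_pos]
    exact ⟨i, mem_filter.mpr ⟨mem_univ i, hi⟩⟩
  rw [funext_iff, funext_iff, ← Matrix.col_mul_eq_iff_of_mul_eq_one hU, hΓ_factor, hΓ]
  exact col_eq_iff_of_apply_eq_div_comp hzsurj hnr_ne_zero T p p'

/-- In the hyper-SBM with `Γ = ZBT` of rank `d` and SVD `Γ = U S Vᵀ` (orthonormal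
`U`, `V`, diagonal positive `S`), the interaction latent positions separate types:
`S Vᵀ e_p = S Vᵀ e_{p'}` if and only if the type vectors satisfy `T e_p = T e_{p'}`. -/
theorem stmt17 (n m d : ℕ) (z : Fin n → Fin d) (hzsurj : Function.Surjective z)
    (nr : Fin d → ℕ) (hnr : nr = fun r => (Finset.univ.filter fun i => z i = r).card)
    (T : Fin d → Fin m → ℕ) (hT : ∀ r p, T r p ≤ nr r)
    (Γ : Matrix (Fin n) (Fin m) ℝ)
    (hΓ : Γ = Matrix.of fun i p => (T (z i) p : ℝ) / (nr (z i) : ℝ))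
    (U : Matrix (Fin n) (Fin d) ℝ) (hU : U.transpose * U = 1)
    (s : Fin d → ℝ) (hs : ∀ r, 0 < s r)
    (S : Matrix (Fin d) (Fin d) ℝ) (hS : S = Matrix.diagonal s)
    (V : Matrix (Fin m) (Fin d) ℝ) (hV : V.transpose * V = 1)
    (hSVD : Γ = U * S * V.transpose)
    (p p' : Fin m) :
    (fun r => (S * V.transpose) r p) = (fun r => (S * V.transpose) r p') ↔
      (fun r => T r p) = fun r => T r p' :=
  stmt17_general n m d z hzsurj nr hnr T Γ hΓ U hU S V hSVD p p'
end
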